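/- arXiv:1804.04255 — 6 statements merged into one kernel-verified Lean document; each statement's English description precedes it below -/
import Mathlib

section
/- Theorem 1 (unbiasedness of the MSE estimator): Assume π_{kl} > 0 for all k ≠ l. Define the random variable M̂ = Σ_{k∈U₂} I_k (π_k − a)² y_k² / (a² π_k) + Σ_{k≠l, k,l∈U₂} I_k I_l (π_k − a)(π_l − a) y_k y_l / (a² π_{kl}) + Σ_{k∈U} I_k (Δ_kk/π_k) y_k² / (π_k*)² + Σ_{k≠l, k,l∈U} I_k I_l (Δ_kl/π_{kl}) y_k y_l / (π_k* π_l*). Then E[M̂] = E[(t̂_IHT − t_y)²]. -/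
/-!
With `z k = y k / π* k` the IHT estimator is `∑ I k * z k`, and since `I k ^ 2 = I k` its mean
squared error splits into the variance `∑ Δ_kk z_k² + ∑_{k ≠ l} Δ_kl z_k z_l` and the squared
bias `(∑_{k ∈ U₂} (π k - a) / a * y k) ^ 2`. The last two sums of `M̂` are the Horvitz–Thompson
estimator of the variance, the first two that of the squared bias written as a double sum, and
`I k * c / π k`, `I k * I l * c / π_kl` both have expectation `c`.
-/

open MeasureTheory Finset

theorem sq_sum_eq_sum_sq_add_sum_offDiag {ι R : Type*} [CommSemiring R]
    (s : Finset ι) (u : ι → R) :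
    (∑ k ∈ s, u k) ^ 2 = ∑ k ∈ s, u k ^ 2 + ∑ p ∈ s.offDiag, u p.1 * u p.2 := by
  classical
  rw [sq, sum_mul_sum, ← sum_product', ← diag_union_offDiag s,
    sum_union (disjoint_diag_offDiag s), sum_diag]
  simp only [sq]

section InclusionIndicators

variable {Ω ι : Type*} [MeasurableSpace Ω] {μ : Measure Ω}
  {I : ι → Ω → ℝ} {π : ι → ℝ} {π2 : ι → ι → ℝ}

theorem integral_sum_mul_add_sum_offDiag_mul (s : Finset ι)
    (hIint : ∀ k, Integrable (I k) μ) (hIint2 : ∀ k l, Integrable (fun ω => I k ω * I l ω) μ)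
    (hπ : ∀ k, π k = ∫ ω, I k ω ∂μ) (hπ2 : ∀ k l, k ≠ l → π2 k l = ∫ ω, I k ω * I l ω ∂μ)
    (g : ι → ℝ) (h : ι × ι → ℝ) :
    ∫ ω, (∑ k ∈ s, I k ω * g k + ∑ p ∈ s.offDiag, I p.1 ω * I p.2 ω * h p) ∂μ
      = ∑ k ∈ s, π k * g k + ∑ p ∈ s.offDiag, π2 p.1 p.2 * h p := by
  rw [integral_add (by fun_prop) (by fun_prop),
    integral_finsetSum _ fun k _ => (hIint k).mul_const _,
    integral_finsetSum _ fun p _ => (hIint2 p.1 p.2).mul_const _]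
  congr 1 <;> refine sum_congr rfl fun p hp => ?_
  · rw [integral_mul_const, hπ]
  · rw [integral_mul_const, hπ2 _ _ (mem_offDiag.mp hp).2.2]

theorem integral_sq_sum_mul_sub [IsProbabilityMeasure μ] (s : Finset ι)
    (hIsq : ∀ k ω, I k ω ^ 2 = I k ω)
    (hIint : ∀ k, Integrable (I k) μ) (hIint2 : ∀ k l, Integrable (fun ω => I k ω * I l ω) μ)
    (hπ : ∀ k, π k = ∫ ω, I k ω ∂μ) (hπ2 : ∀ k l, k ≠ l → π2 k l = ∫ ω, I k ω * I l ω ∂μ)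
    (z : ι → ℝ) (t : ℝ) :
    ∫ ω, (∑ k ∈ s, I k ω * z k - t) ^ 2 ∂μ
      = (∑ k ∈ s, (π k - π k ^ 2) * z k ^ 2
          + ∑ p ∈ s.offDiag, (π2 p.1 p.2 - π p.1 * π p.2) * (z p.1 * z p.2))
        + (∑ k ∈ s, π k * z k - t) ^ 2 := by
  have hexpand : ∀ ω, (∑ k ∈ s, I k ω * z k - t) ^ 2
      = (∑ k ∈ s, I k ω * (z k ^ 2 - 2 * t * z k)
          + ∑ p ∈ s.offDiag, I p.1 ω * I p.2 ω * (z p.1 * z p.2)) + t ^ 2 := by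
    intro ω
    have hlin : ∑ k ∈ s, I k ω * (2 * t * z k) = 2 * (∑ k ∈ s, I k ω * z k) * t := by
      rw [mul_sum, sum_mul]; exact sum_congr rfl fun _ _ => by ring
    have hcross : ∑ p ∈ s.offDiag, I p.1 ω * z p.1 * (I p.2 ω * z p.2)
        = ∑ p ∈ s.offDiag, I p.1 ω * I p.2 ω * (z p.1 * z p.2) :=
      sum_congr rfl fun _ _ => by ring
    simp only [sub_sq, sq_sum_eq_sum_sq_add_sum_offDiag, mul_pow, hIsq, mul_sub, sum_sub_distrib]
    linear_combination hcross + hlin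
  simp_rw [hexpand]
  rw [integral_add (by fun_prop) (integrable_const _),
    integral_sum_mul_add_sum_offDiag_mul s hIint hIint2 hπ hπ2, integral_const, probReal_univ,
    smul_eq_mul, one_mul]
  have hw := sq_sum_eq_sum_sq_add_sum_offDiag s fun k => π k * z k
  have e1 : ∑ k ∈ s, π k * (z k ^ 2 - 2 * t * z k)
      = ∑ k ∈ s, π k * z k ^ 2 - 2 * t * ∑ k ∈ s, π k * z k := by
    rw [mul_sum, ← sum_sub_distrib]; exact sum_congr rfl fun _ _ => by ring
  have e2 : ∑ k ∈ s, (π k - π k ^ 2) * z k ^ 2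
      = ∑ k ∈ s, π k * z k ^ 2 - ∑ k ∈ s, (π k * z k) ^ 2 := by
    rw [← sum_sub_distrib]; exact sum_congr rfl fun _ _ => by ring
  have e3 : ∑ p ∈ s.offDiag, (π2 p.1 p.2 - π p.1 * π p.2) * (z p.1 * z p.2)
      = ∑ p ∈ s.offDiag, π2 p.1 p.2 * (z p.1 * z p.2)
        - ∑ p ∈ s.offDiag, π p.1 * z p.1 * (π p.2 * z p.2) := by
    rw [← sum_sub_distrib]; exact sum_congr rfl fun _ _ => by ring
  linear_combination e1 - e2 - e3 - hw

end InclusionIndicators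

theorem sum_mul_div_modified_sub_sum {ι : Type*} [Fintype ι] [DecidableEq ι] {s : Finset ι}
    {π πs : ι → ℝ} {a : ℝ} (ha : a ≠ 0) (hπ : ∀ k ∉ s, π k ≠ 0)
    (hπs : ∀ k, πs k = if k ∈ s then a else π k) (y : ι → ℝ) :
    ∑ k, π k * (y k / πs k) - ∑ k, y k = ∑ k ∈ s, (π k - a) / a * y k := by
  rw [← sum_sub_distrib, ← sum_subset (subset_univ s) fun k _ hk => ?_]
  · refine sum_congr rfl fun k hk => ?_
    rw [hπs, if_pos hk]
    field_simp
  · rw [hπs, if_neg hk]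
    field_simp [hπ k hk]
    ring

theorem iht_mse_estimator_unbiased_general
    {Ω : Type*} [MeasurableSpace Ω] (μ : Measure Ω) [IsProbabilityMeasure μ]
    (N : ℕ) (y : Fin N → ℝ) (I : Fin N → Ω → ℝ)
    (hI01 : ∀ k, ∀ ω, I k ω = 0 ∨ I k ω = 1)
    (hIint : ∀ k, Integrable (I k) μ)
    (hIint2 : ∀ k l, Integrable (fun ω => I k ω * I l ω) μ)
    (π : Fin N → ℝ)
    (hπ : ∀ k, π k = ∫ ω, I k ω ∂μ)
    (hπmem : ∀ k, π k ∈ Set.Ioc (0 : ℝ) 1)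
    (π2 : Fin N → Fin N → ℝ)
    (hπ2 : ∀ k l, k ≠ l → π2 k l = ∫ ω, I k ω * I l ω ∂μ)
    (hπ2pos : ∀ k l, k ≠ l → 0 < π2 k l)
    (a : ℝ) (ha : a ∈ Set.Ioc (0 : ℝ) 1)
    (U2 : Finset (Fin N))
    (πs : Fin N → ℝ)
    (hπs : ∀ k, πs k = if k ∈ U2 then a else π k) :
    (∫ ω,
        ((∑ k ∈ U2, I k ω * ((π k - a) ^ 2 * y k ^ 2 / (a ^ 2 * π k)))
          + (∑ p ∈ U2.offDiag,
              I p.1 ω * I p.2 ω *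
                ((π p.1 - a) * (π p.2 - a) * y p.1 * y p.2 / (a ^ 2 * π2 p.1 p.2)))
          + (∑ k, I k ω * ((π k * (1 - π k) / π k) * y k ^ 2 / (πs k) ^ 2))
          + (∑ p ∈ (Finset.univ : Finset (Fin N)).offDiag,
              I p.1 ω * I p.2 ω *
                (((π2 p.1 p.2 - π p.1 * π p.2) / π2 p.1 p.2) * y p.1 * y p.2
                  / (πs p.1 * πs p.2)))) ∂μ)
      = ∫ ω, ((∑ k, I k ω * y k / πs k) - ∑ k, y k) ^ 2 ∂μ := by
  have hIsq : ∀ k ω, I k ω ^ 2 = I k ω := fun k ω => by rcases hI01 k ω with h | h <;> simp [h]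
  have hπ0 : ∀ k, π k ≠ 0 := fun k => (hπmem k).1.ne'
  have hπ2ne : ∀ p ∈ (Finset.univ : Finset (Fin N)).offDiag, π2 p.1 p.2 ≠ 0 :=
    fun p hp => (hπ2pos _ _ (mem_offDiag.mp hp).2.2).ne'
  conv_rhs => simp only [mul_div_assoc]
  -- split `M̂` into the estimator of the squared bias and that of the variance
  conv_lhs => arg 2; ext ω; rw [add_assoc]
  rw [integral_sq_sum_mul_sub univ hIsq hIint hIint2 hπ hπ2,
    sum_mul_div_modified_sub_sum ha.1.ne' (fun k _ => hπ0 k) hπs, sq_sum_eq_sum_sq_add_sum_offDiag,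
    integral_add (by fun_prop) (by fun_prop),
    integral_sum_mul_add_sum_offDiag_mul U2 hIint hIint2 hπ hπ2,
    integral_sum_mul_add_sum_offDiag_mul univ hIint hIint2 hπ hπ2, add_comm]
  congr 1 <;> congr 1 <;> refine sum_congr rfl fun p hp => ?_
  · field_simp [hπ0 p]
  · field_simp [hπ2ne p hp]
  · field_simp [hπ0 p]
  · field_simp [hπ2ne p (offDiag_mono (subset_univ U2) hp)]

/-- Theorem 1 (unbiasedness of the MSE estimator): the random variable `M̂` built from the
sampled units is an unbiased estimator of the mean-squared error of the IHT estimator. -/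
theorem iht_mse_estimator_unbiased
    {Ω : Type*} [MeasurableSpace Ω] (μ : Measure Ω) [IsProbabilityMeasure μ]
    (N : ℕ) (y : Fin N → ℝ) (I : Fin N → Ω → ℝ)
    (hI01 : ∀ k, ∀ ω, I k ω = 0 ∨ I k ω = 1)
    (hIint : ∀ k, Integrable (I k) μ)
    (hIint2 : ∀ k l, Integrable (fun ω => I k ω * I l ω) μ)
    (π : Fin N → ℝ)
    (hπ : ∀ k, π k = ∫ ω, I k ω ∂μ)
    (hπmem : ∀ k, π k ∈ Set.Ioc (0 : ℝ) 1)
    (π2 : Fin N → Fin N → ℝ)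
    (hπ2 : ∀ k l, k ≠ l → π2 k l = ∫ ω, I k ω * I l ω ∂μ)
    (hπ2pos : ∀ k l, k ≠ l → 0 < π2 k l)
    (a : ℝ) (ha : a ∈ Set.Ioc (0 : ℝ) 1)
    (U2 : Finset (Fin N)) (K : ℕ) (hK : U2.card = K)
    (hU2 : ∀ k ∈ U2, π k ≤ a)
    (πs : Fin N → ℝ)
    (hπs : ∀ k, πs k = if k ∈ U2 then a else π k) :
    (∫ ω,
        ((∑ k ∈ U2, I k ω * ((π k - a) ^ 2 * y k ^ 2 / (a ^ 2 * π k)))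
          + (∑ p ∈ U2.offDiag,
              I p.1 ω * I p.2 ω *
                ((π p.1 - a) * (π p.2 - a) * y p.1 * y p.2 / (a ^ 2 * π2 p.1 p.2)))
          + (∑ k, I k ω * ((π k * (1 - π k) / π k) * y k ^ 2 / (πs k) ^ 2))
          + (∑ p ∈ (Finset.univ : Finset (Fin N)).offDiag,
              I p.1 ω * I p.2 ω *
                (((π2 p.1 p.2 - π p.1 * π p.2) / π2 p.1 p.2) * y p.1 * y p.2
                  / (πs p.1 * πs p.2)))) ∂μ)
      = ∫ ω, ((∑ k, I k ω * y k / πs k) - ∑ k, y k) ^ 2 ∂μ :=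
  iht_mse_estimator_unbiased_general μ N y I hI01 hIint hIint2 π hπ hπmem π2 hπ2 hπ2pos a ha U2 πs
    hπs
end

section
/- Theorem 2 (bias bound for the IHT estimator, non-asymptotic form): If |y_k| ≤ C for every k ∈ U, then the bias of the mean estimator satisfies |E[N⁻¹ t̂_IHT] − N⁻¹ t_y| ≤ C K / N. -/
open MeasureTheory Finset

/-
Taking expectations term by term, `E[t̂_IHT] = ∑ₖ πₖ yₖ / πₖ*`. Off `U₂` the weights are the true
inclusion probabilities and the terms are unbiased; on `U₂` the bias of the `k`-th term is
`(πₖ / a - 1) yₖ`, and `0 < πₖ ≤ a` makes this at most `|yₖ| ≤ C` in absolute value.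
Summing over the `K` indices of `U₂` and dividing by `N` gives the bound.
-/

theorem integral_sum_mul_const {Ω ι : Type*} [MeasurableSpace Ω] {μ : Measure Ω} [Fintype ι]
    {I : ι → Ω → ℝ} (hI : ∀ k, Integrable (I k) μ) (c : ι → ℝ) :
    ∫ ω, ∑ k, I k ω * c k ∂μ = ∑ k, (∫ ω, I k ω ∂μ) * c k := by
  rw [integral_finsetSum _ fun k _ => (hI k).mul_const (c k)]
  simp_rw [integral_mul_const]

theorem abs_mul_div_sub_le_abs {p a : ℝ} (hp : 0 ≤ p) (hpa : p ≤ a) (y : ℝ) :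
    |p * (y / a) - y| ≤ |y| := by
  rcases hp.eq_or_lt with rfl | hp
  · simp
  · have ha : 0 < a := hp.trans_le hpa
    have hratio : p * (y / a) - y = -((1 - p / a) * y) := by field_simp; ring
    have h0 : 0 ≤ 1 - p / a := sub_nonneg.2 ((div_le_one ha).2 hpa)
    have h1 : 1 - p / a ≤ 1 := sub_le_self _ (div_nonneg hp.le ha.le)
    rw [hratio, abs_neg, abs_mul, abs_of_nonneg h0]
    exact mul_le_of_le_one_left (abs_nonneg y) h1

theorem abs_sum_le_mul_card {ι : Type*} [Fintype ι] {f : ι → ℝ} {s : Finset ι} {C : ℝ}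
    (hzero : ∀ k ∉ s, f k = 0) (hle : ∀ k ∈ s, |f k| ≤ C) : |∑ k, f k| ≤ C * #s := by
  rw [← sum_subset (subset_univ s) fun k _ hk => hzero k hk]
  calc |∑ k ∈ s, f k| ≤ ∑ k ∈ s, |f k| := abs_sum_le_sum_abs _ _
    _ ≤ #s • C := sum_le_card_nsmul _ _ _ hle
    _ = C * #s := by rw [nsmul_eq_mul, mul_comm]

theorem iht_bias_bound_general
    {Ω : Type*} [MeasurableSpace Ω] (μ : Measure Ω)
    (N : ℕ) (y : Fin N → ℝ) (I : Fin N → Ω → ℝ)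
    (hIint : ∀ k, Integrable (I k) μ)
    (π : Fin N → ℝ)
    (hπ : ∀ k, π k = ∫ ω, I k ω ∂μ)
    (hπmem : ∀ k, π k ∈ Set.Ioc (0 : ℝ) 1)
    (a : ℝ)
    (U2 : Finset (Fin N)) (K : ℕ) (hK : U2.card = K)
    (hU2 : ∀ k ∈ U2, π k ≤ a)
    (πs : Fin N → ℝ)
    (hπs : ∀ k, πs k = if k ∈ U2 then a else π k)
    (C : ℝ) (hy : ∀ k, |y k| ≤ C) :
    |(∫ ω, ((N : ℝ)⁻¹ * ∑ k, I k ω * y k / πs k) ∂μ) - (N : ℝ)⁻¹ * ∑ k, y k|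
      ≤ C * K / N := by
  have hmean : ∫ ω, ((N : ℝ)⁻¹ * ∑ k, I k ω * y k / πs k) ∂μ
      = (N : ℝ)⁻¹ * ∑ k, π k * (y k / πs k) := by
    simp_rw [mul_div_assoc, integral_const_mul, integral_sum_mul_const hIint, ← hπ]
  have hbias : |∑ k, (π k * (y k / πs k) - y k)| ≤ C * K := by
    refine hK ▸ abs_sum_le_mul_card (s := U2) (fun k hk => ?_) (fun k hk => ?_)
    · rw [hπs, if_neg hk, mul_div_cancel₀ _ (hπmem k).1.ne', sub_self]
    · rw [hπs, if_pos hk]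
      exact (abs_mul_div_sub_le_abs (hπmem k).1.le (hU2 k hk) (y k)).trans (hy k)
  rw [hmean, ← mul_sub, ← sum_sub_distrib, abs_mul, abs_of_nonneg (by positivity),
    inv_mul_eq_div]
  exact div_le_div_of_nonneg_right hbias N.cast_nonneg

/-- Theorem 2 (bias bound for the IHT estimator, non-asymptotic form):
if `|y_k| ≤ C` for every `k`, then `|E[N⁻¹ t̂_IHT] − N⁻¹ t_y| ≤ C K / N`. -/
theorem iht_bias_bound
    {Ω : Type*} [MeasurableSpace Ω] (μ : Measure Ω) [IsProbabilityMeasure μ]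
    (N : ℕ) (y : Fin N → ℝ) (I : Fin N → Ω → ℝ)
    (hI01 : ∀ k, ∀ ω, I k ω = 0 ∨ I k ω = 1)
    (hIint : ∀ k, Integrable (I k) μ)
    (π : Fin N → ℝ)
    (hπ : ∀ k, π k = ∫ ω, I k ω ∂μ)
    (hπmem : ∀ k, π k ∈ Set.Ioc (0 : ℝ) 1)
    (a : ℝ) (ha : a ∈ Set.Ioc (0 : ℝ) 1)
    (U2 : Finset (Fin N)) (K : ℕ) (hK : U2.card = K)
    (hU2 : ∀ k ∈ U2, π k ≤ a)
    (πs : Fin N → ℝ)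
    (hπs : ∀ k, πs k = if k ∈ U2 then a else π k)
    (C : ℝ) (hC : 0 < C) (hy : ∀ k, |y k| ≤ C) :
    |(∫ ω, ((N : ℝ)⁻¹ * ∑ k, I k ω * y k / πs k) ∂μ) - (N : ℝ)⁻¹ * ∑ k, y k|
      ≤ C * K / N :=
  iht_bias_bound_general μ N y I hIint π hπ hπmem a U2 K hK hU2 πs hπs C hy
end

section
/- Theorem 2 (MSE bound for the IHT estimator, non-asymptotic form): If λ ≤ π_k for every k ∈ U with λ > 0, |y_k| ≤ C for every k ∈ U, and |π_{kl} − π_k π_l| ≤ M for all k ≠ l, then E[(N⁻¹ t̂_IHT − N⁻¹ t_y)²] ≤ C² K² / N² + C²/(λ N) + C² M / λ². -/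
/-!
The mean squared error splits as variance plus squared bias. The estimator is a linear
combination `∑ I_k w_k` of the sampling indicators with `w_k = y_k / π_k*`, so its variance is
`∑_{k,l} w_k w_l Cov(I_k, I_l)`. On the diagonal `Var I_k ≤ π_k`, and `π_k ≤ π_k*`,
`λ ≤ π_k*` give `w_k² π_k ≤ C²/λ`; off the diagonal `|w_k w_l Cov(I_k, I_l)| ≤ M C²/λ²`.
The bias `∑ (π_k/π_k* - 1) y_k` only involves units of `U₂`, each contributing at most
`|y_k| ≤ C` because `0 < π_k ≤ a`.
-/

open MeasureTheory ProbabilityTheory Finset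

section Moments

variable {Ω : Type*} [MeasurableSpace Ω] {μ : Measure Ω} [IsProbabilityMeasure μ]

lemma integral_sub_const_sq {X : Ω → ℝ} (hX : MemLp X 2 μ) (c : ℝ) :
    ∫ ω, (X ω - c) ^ 2 ∂μ = Var[X; μ] + (μ[X] - c) ^ 2 := by
  have hXc : MemLp (fun ω ↦ X ω - c) 2 μ := hX.sub (memLp_const c)
  rw [← variance_sub_const hX.aestronglyMeasurable c, variance_eq_sub hXc,
    integral_sub (hX.integrable one_le_two) (integrable_const c), integral_const,
    probReal_univ, one_smul]
  simp only [Pi.pow_apply, sub_add_cancel]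

lemma memLp_of_forall_eq_zero_or_eq_one {X : Ω → ℝ} (hX : Integrable X μ)
    (h01 : ∀ ω, X ω = 0 ∨ X ω = 1) (p : ENNReal) : MemLp X p μ :=
  MemLp.of_bound hX.aestronglyMeasurable 1 <| .of_forall fun ω ↦ by
    rcases h01 ω with h | h <;> simp [h]

lemma variance_le_integral_of_forall_eq_zero_or_eq_one {X : Ω → ℝ}
    (hX : Integrable X μ) (h01 : ∀ ω, X ω = 0 ∨ X ω = 1) : Var[X; μ] ≤ μ[X] := by
  have hsq : X ^ 2 = X := funext fun ω ↦ by rcases h01 ω with h | h <;> simp [h]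
  simpa only [hsq] using variance_le_expectation_sq hX.aestronglyMeasurable

variable {ι : Type*} [Fintype ι] {X : ι → Ω → ℝ}

lemma variance_fun_sum_mul_const (hX : ∀ i, MemLp (X i) 2 μ) (w : ι → ℝ) :
    Var[fun ω ↦ ∑ i, X i ω * w i; μ] = ∑ i, ∑ j, w i * w j * cov[X i, X j; μ] := by
  rw [variance_fun_sum fun i ↦ (hX i).mul_const (w i)]
  simp only [covariance_mul_const_left, covariance_mul_const_right]
  exact sum_congr rfl fun i _ ↦ sum_congr rfl fun j _ ↦ by ring

lemma integral_fun_sum_mul_const_sub_sq (hX : ∀ i, MemLp (X i) 2 μ) (w : ι → ℝ) (c : ℝ) :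
    ∫ ω, (∑ i, X i ω * w i - c) ^ 2 ∂μ
      = Var[fun ω ↦ ∑ i, X i ω * w i; μ] + (∑ i, μ[X i] * w i - c) ^ 2 := by
  have hmean : μ[fun ω ↦ ∑ i, X i ω * w i] = ∑ i, μ[X i] * w i := by
    rw [integral_finsetSum _ fun i _ ↦ ((hX i).integrable one_le_two).mul_const _]
    simp only [integral_mul_const]
  rw [integral_sub_const_sq (memLp_finsetSum _ fun i _ ↦ (hX i).mul_const _), hmean]

end Moments

lemma sum_sum_le_of_diag_le_of_offDiag_le {ι : Type*} [Fintype ι] [DecidableEq ι]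
    (A : ι → ι → ℝ) {d e : ℝ} (he : 0 ≤ e) (hd : ∀ i, A i i ≤ d)
    (ho : ∀ i j, i ≠ j → A i j ≤ e) :
    ∑ i, ∑ j, A i j ≤ Fintype.card ι * d + Fintype.card ι ^ 2 * e := by
  have hA : ∀ i j, A i j ≤ (if i = j then d else 0) + e := fun i j ↦ by
    by_cases hij : i = j
    · subst hij; simpa using (hd i).trans (le_add_of_nonneg_right he)
    · simpa [hij] using ho i j hij
  calc ∑ i, ∑ j, A i j ≤ ∑ i : ι, ∑ j : ι, ((if i = j then d else 0) + e) :=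
        sum_le_sum fun i _ ↦ sum_le_sum fun j _ ↦ hA i j
    _ = Fintype.card ι * d + Fintype.card ι ^ 2 * e := by
        simp only [sum_add_distrib, sum_ite_eq, mem_univ, ↓reduceIte, sum_const, card_univ,
          nsmul_eq_mul, add_right_inj]
        ring

lemma abs_div_le_div_of_le {y q C lam : ℝ} (hlam : 0 < lam) (hq : lam ≤ q) (hy : |y| ≤ C) :
    |y / q| ≤ C / lam := by
  rw [abs_div, abs_of_pos (hlam.trans_le hq)]
  exact div_le_div₀ ((abs_nonneg y).trans hy) hy hlam hq

lemma sq_div_mul_le {y p q C lam : ℝ} (hlam : 0 < lam) (hp : lam ≤ p) (hpq : p ≤ q)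
    (hy : |y| ≤ C) : (y / q) ^ 2 * p ≤ C ^ 2 / lam := by
  have hy2 : y ^ 2 ≤ C ^ 2 := sq_le_sq.2 (hy.trans (le_abs_self C))
  calc (y / q) ^ 2 * p ≤ (y / q) ^ 2 * q := by gcongr
    _ = y ^ 2 / q := by field_simp
    _ ≤ C ^ 2 / lam := div_le_div₀ (sq_nonneg C) hy2 hlam (hp.trans hpq)

lemma abs_mul_div_sub_le {y p q : ℝ} (hp : 0 ≤ p) (hpq : p ≤ q) : |p * (y / q) - y| ≤ |y| := by
  have h1 : |p / q - 1| ≤ 1 := abs_le.2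
    ⟨by linarith [div_nonneg hp (hp.trans hpq)], by linarith [div_le_one_of_le₀ hpq (hp.trans hpq)]⟩
  calc |p * (y / q) - y| = |y| * |p / q - 1| := by rw [← abs_mul]; congr 1; ring
    _ ≤ |y| := mul_le_of_le_one_right (abs_nonneg y) h1

section Sampling

variable {Ω : Type*} [MeasurableSpace Ω] {μ : Measure Ω} [IsProbabilityMeasure μ]
  {ι : Type*} [Fintype ι] {I : ι → Ω → ℝ}

lemma variance_fun_sum_mul_div_le (hI : ∀ i, Integrable (I i) μ)
    (h01 : ∀ i ω, I i ω = 0 ∨ I i ω = 1) {y q : ι → ℝ} {C lam M : ℝ} (hlam : 0 < lam)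
    (hlamπ : ∀ i, lam ≤ μ[I i]) (hq : ∀ i, μ[I i] ≤ q i) (hy : ∀ i, |y i| ≤ C) (hM : 0 ≤ M)
    (hcov : ∀ i j, i ≠ j → |cov[I i, I j; μ]| ≤ M) :
    Var[fun ω ↦ ∑ i, I i ω * (y i / q i); μ]
      ≤ Fintype.card ι * (C ^ 2 / lam) + Fintype.card ι ^ 2 * (C / lam * (C / lam) * M) := by
  classical
  have hI2 : ∀ i, MemLp (I i) 2 μ := fun i ↦ memLp_of_forall_eq_zero_or_eq_one (hI i) (h01 i) 2
  have hw : ∀ i, |y i / q i| ≤ C / lam := fun i ↦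
    abs_div_le_div_of_le hlam ((hlamπ i).trans (hq i)) (hy i)
  rw [variance_fun_sum_mul_const hI2]
  refine sum_sum_le_of_diag_le_of_offDiag_le _ (mul_nonneg (mul_self_nonneg _) hM)
    (fun i ↦ ?_) (fun i j hij ↦ ?_)
  · rw [covariance_self (hI2 i).aemeasurable, ← sq]
    calc (y i / q i) ^ 2 * Var[I i; μ] ≤ (y i / q i) ^ 2 * μ[I i] := by
          gcongr; exact variance_le_integral_of_forall_eq_zero_or_eq_one (hI i) (h01 i)
      _ ≤ C ^ 2 / lam := sq_div_mul_le hlam (hlamπ i) (hq i) (hy i)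
  · calc _ ≤ |y i / q i| * |y j / q j| * |cov[I i, I j; μ]| := by
          rw [← abs_mul, ← abs_mul]; exact le_abs_self _
      _ ≤ C / lam * (C / lam) * M := by
          have hCl : 0 ≤ C / lam := (abs_nonneg _).trans (hw i)
          gcongr
          exacts [hw i, hw j, hcov i j hij]

lemma abs_sum_mul_div_ite_sub_sum_le [DecidableEq ι] (s : Finset ι) {p y : ι → ℝ} {a C : ℝ}
    (hp : ∀ i, 0 < p i) (hpa : ∀ i ∈ s, p i ≤ a) (hy : ∀ i, |y i| ≤ C) :
    |∑ i, p i * (y i / if i ∈ s then a else p i) - ∑ i, y i| ≤ s.card * C := by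
  have hsupp : ∑ i, (p i * (y i / if i ∈ s then a else p i) - y i)
      = ∑ i ∈ s, (p i * (y i / a) - y i) := by
    rw [← sum_subset (subset_univ s) fun i _ hi ↦ by
      rw [if_neg hi, mul_div_cancel₀ _ (hp i).ne', sub_self]]
    exact sum_congr rfl fun i hi ↦ by rw [if_pos hi]
  rw [← sum_sub_distrib, hsupp, ← nsmul_eq_mul]
  refine (abs_sum_le_sum_abs _ _).trans (sum_le_card_nsmul _ _ _ fun i hi ↦ ?_)
  exact (abs_mul_div_sub_le (hp i).le (hpa i hi)).trans (hy i)

end Sampling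

theorem iht_mse_bound_general
    {Ω : Type*} [MeasurableSpace Ω] (μ : Measure Ω) [IsProbabilityMeasure μ]
    (N : ℕ) (y : Fin N → ℝ) (I : Fin N → Ω → ℝ)
    (hI01 : ∀ k, ∀ ω, I k ω = 0 ∨ I k ω = 1)
    (hIint : ∀ k, Integrable (I k) μ)
    (π : Fin N → ℝ)
    (hπ : ∀ k, π k = ∫ ω, I k ω ∂μ)
    (π2 : Fin N → Fin N → ℝ)
    (hπ2 : ∀ k l, k ≠ l → π2 k l = ∫ ω, I k ω * I l ω ∂μ)
    (a : ℝ)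
    (U2 : Finset (Fin N)) (K : ℕ) (hK : U2.card = K)
    (hU2 : ∀ k ∈ U2, π k ≤ a)
    (πs : Fin N → ℝ)
    (hπs : ∀ k, πs k = if k ∈ U2 then a else π k)
    (lam : ℝ) (hlam : 0 < lam) (hlamπ : ∀ k, lam ≤ π k)
    (C : ℝ) (hy : ∀ k, |y k| ≤ C)
    (M : ℝ) (hM : 0 ≤ M)
    (hΔ : ∀ k l, k ≠ l → |π2 k l - π k * π l| ≤ M) :
    (∫ ω, ((N : ℝ)⁻¹ * (∑ k, I k ω * y k / πs k) - (N : ℝ)⁻¹ * ∑ k, y k) ^ 2 ∂μ)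
      ≤ C ^ 2 * K ^ 2 / N ^ 2 + C ^ 2 / (lam * N) + C ^ 2 * M / lam ^ 2 := by
  obtain rfl : πs = fun k ↦ if k ∈ U2 then a else π k := funext hπs
  have hI2 : ∀ k, MemLp (I k) 2 μ := fun k ↦
    memLp_of_forall_eq_zero_or_eq_one (hIint k) (hI01 k) 2
  have hcov : ∀ k l, k ≠ l → |cov[I k, I l; μ]| ≤ M := fun k l hkl ↦ by
    rw [covariance_eq_sub (hI2 k) (hI2 l), ← hπ, ← hπ]
    exact hπ2 k l hkl ▸ hΔ k l hkl
  have hπ_le : ∀ k, μ[I k] ≤ if k ∈ U2 then a else π k := fun k ↦ by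
    rw [← hπ]; split_ifs with hk; exacts [hU2 k hk, le_rfl]
  have hvar := variance_fun_sum_mul_div_le hIint hI01 hlam (fun k ↦ hπ k ▸ hlamπ k) hπ_le hy hM
    hcov
  have hbias := abs_sum_mul_div_ite_sub_sum_le U2 (fun k ↦ hlam.trans_le (hlamπ k)) hU2 hy
  simp_rw [← mul_sub, mul_pow, mul_div_assoc (I _ _)]
  rw [integral_const_mul, integral_fun_sum_mul_const_sub_sq hI2]
  simp only [← hπ, Fintype.card_fin] at hvar ⊢
  calc _ ≤ (N : ℝ)⁻¹ ^ 2
        * (N * (C ^ 2 / lam) + N ^ 2 * (C / lam * (C / lam) * M) + (K * C) ^ 2) := by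
        gcongr ?_ * (?_ + ?_)
        exact sq_le_sq.2 (hK ▸ hbias.trans (le_abs_self _))
    _ ≤ C ^ 2 * K ^ 2 / N ^ 2 + C ^ 2 / (lam * N) + C ^ 2 * M / lam ^ 2 := by
        rcases eq_or_ne (N : ℝ) 0 with hN | hN
        · -- `(0 : ℝ)⁻¹ = 0` and `x / 0 = 0`: the left side vanishes, `C² M / λ²` remains.
          simp only [hN]
          simpa using div_nonneg (mul_nonneg (sq_nonneg C) hM) (sq_nonneg lam)
        · exact le_of_eq (by field_simp; ring)

/-- Theorem 2 (MSE bound for the IHT estimator, non-asymptotic form):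
if `λ ≤ π_k` with `λ > 0`, `|y_k| ≤ C`, and `|π_{kl} − π_k π_l| ≤ M` for all `k ≠ l`, then
`E[(N⁻¹ t̂_IHT − N⁻¹ t_y)²] ≤ C² K²/N² + C²/(λ N) + C² M / λ²`. -/
theorem iht_mse_bound
    {Ω : Type*} [MeasurableSpace Ω] (μ : Measure Ω) [IsProbabilityMeasure μ]
    (N : ℕ) (y : Fin N → ℝ) (I : Fin N → Ω → ℝ)
    (hI01 : ∀ k, ∀ ω, I k ω = 0 ∨ I k ω = 1)
    (hIint : ∀ k, Integrable (I k) μ)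
    (hIint2 : ∀ k l, Integrable (fun ω => I k ω * I l ω) μ)
    (π : Fin N → ℝ)
    (hπ : ∀ k, π k = ∫ ω, I k ω ∂μ)
    (hπmem : ∀ k, π k ∈ Set.Ioc (0 : ℝ) 1)
    (π2 : Fin N → Fin N → ℝ)
    (hπ2 : ∀ k l, k ≠ l → π2 k l = ∫ ω, I k ω * I l ω ∂μ)
    (a : ℝ) (ha : a ∈ Set.Ioc (0 : ℝ) 1)
    (U2 : Finset (Fin N)) (K : ℕ) (hK : U2.card = K)
    (hU2 : ∀ k ∈ U2, π k ≤ a)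
    (πs : Fin N → ℝ)
    (hπs : ∀ k, πs k = if k ∈ U2 then a else π k)
    (lam : ℝ) (hlam : 0 < lam) (hlamπ : ∀ k, lam ≤ π k)
    (C : ℝ) (hC : 0 < C) (hy : ∀ k, |y k| ≤ C)
    (M : ℝ) (hM : 0 ≤ M)
    (hΔ : ∀ k l, k ≠ l → |π2 k l - π k * π l| ≤ M) :
    (∫ ω, ((N : ℝ)⁻¹ * (∑ k, I k ω * y k / πs k) - (N : ℝ)⁻¹ * ∑ k, y k) ^ 2 ∂μ)
      ≤ C ^ 2 * K ^ 2 / N ^ 2 + C ^ 2 / (lam * N) + C ^ 2 * M / lam ^ 2 :=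
  iht_mse_bound_general μ N y I hI01 hIint π hπ π2 hπ2 a U2 K hK hU2 πs hπs lam hlam hlamπ C hy M hM
    hΔ
end

section
/- Key deterministic inequality (F₃ ≥ F₁ in the proof of Theorem 3): Let S be a finite set of cardinality K, let a be a real number with 0 < a ≤ 1/(K+1), and for each k ∈ S let π_k ∈ (0, a] and y_k ∈ ℝ. Then Σ_{k∈S} ((1 − π_k)/π_k) y_k² ≥ Σ_{k∈S} (π_k(1 − π_k)/a²) y_k² + (Σ_{k∈S} (π_k/a − 1) y_k)². -/
/-- Key deterministic inequality (`F₃ ≥ F₁` in the proof of Theorem 3):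
for `0 < a ≤ 1/(K+1)` and `π_k ∈ (0, a]` on a finite set `S` of cardinality `K`,
`Σ ((1 − π_k)/π_k) y_k² ≥ Σ (π_k(1 − π_k)/a²) y_k² + (Σ (π_k/a − 1) y_k)²`. -/
theorem hard_threshold_diagonal_inequality
    {α : Type*} (S : Finset α) (K : ℕ) (hK : S.card = K)
    (a : ℝ) (ha : 0 < a) (haK : a ≤ 1 / ((K : ℝ) + 1))
    (π y : α → ℝ) (hπ : ∀ k ∈ S, π k ∈ Set.Ioc (0 : ℝ) a) :
    ∑ k ∈ S, ((1 - π k) / π k) * y k ^ 2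
      ≥ (∑ k ∈ S, (π k * (1 - π k) / a ^ 2) * y k ^ 2)
        + (∑ k ∈ S, (π k / a - 1) * y k) ^ 2 := by
  rcases S.eq_empty_or_nonempty with rfl | hS
  · simp
  have hK1 : 1 ≤ K := by
    rw [← hK]; exact Finset.card_pos.mpr hS
  have hK1' : (1 : ℝ) ≤ (K : ℝ) := by exact_mod_cast hK1
  have haK' : a * ((K : ℝ) + 1) ≤ 1 := by
    rw [le_div_iff₀ (by positivity)] at haK; linarith
  have hCS : (∑ k ∈ S, (π k / a - 1) * y k) ^ 2
      ≤ (K : ℝ) * ∑ k ∈ S, ((π k / a - 1) * y k) ^ 2 := by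
    have := sq_sum_le_card_mul_sum_sq (s := S) (f := fun k => (π k / a - 1) * y k)
    rw [hK] at this; exact_mod_cast this
  have hpt : ∀ k ∈ S, (π k * (1 - π k) / a ^ 2) * y k ^ 2
      + (K : ℝ) * ((π k / a - 1) * y k) ^ 2 ≤ ((1 - π k) / π k) * y k ^ 2 := by
    intro k hk
    obtain ⟨ht0, hta⟩ := hπ k hk
    set t := π k with htdef
    have h2 : 0 ≤ a + t * (1 - a * ((K : ℝ) + 1)) + t ^ 2 * ((K : ℝ) - 1) := by
      have : 0 ≤ t * (1 - a * ((K : ℝ) + 1)) :=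
        mul_nonneg ht0.le (by linarith)
      have : 0 ≤ t ^ 2 * ((K : ℝ) - 1) :=
        mul_nonneg (sq_nonneg t) (by linarith)
      linarith
    have key : (K : ℝ) * t * (a - t) ^ 2 ≤ (1 - t) * (a ^ 2 - t ^ 2) := by
      nlinarith [mul_nonneg (sub_nonneg.mpr hta) h2]
    have h1 : ((1 - t) / t) * y k ^ 2 - (t * (1 - t) / a ^ 2) * y k ^ 2
        - (K : ℝ) * ((t / a - 1) * y k) ^ 2
        = (((1 - t) * (a ^ 2 - t ^ 2) - (K : ℝ) * t * (a - t) ^ 2) / (t * a ^ 2)) * y k ^ 2 := by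
      field_simp
      ring
    nlinarith [mul_nonneg (div_nonneg (sub_nonneg.mpr key) (by positivity : (0:ℝ) ≤ t * a ^ 2)) (sq_nonneg (y k))]
  calc (∑ k ∈ S, (π k * (1 - π k) / a ^ 2) * y k ^ 2)
        + (∑ k ∈ S, (π k / a - 1) * y k) ^ 2
      ≤ (∑ k ∈ S, (π k * (1 - π k) / a ^ 2) * y k ^ 2)
        + (K : ℝ) * ∑ k ∈ S, ((π k / a - 1) * y k) ^ 2 := by linarith
    _ = ∑ k ∈ S, ((π k * (1 - π k) / a ^ 2) * y k ^ 2
          + (K : ℝ) * ((π k / a - 1) * y k) ^ 2) := by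
        rw [Finset.sum_add_distrib, Finset.mul_sum]
    _ ≤ ∑ k ∈ S, ((1 - π k) / π k) * y k ^ 2 := Finset.sum_le_sum hpt
end

section
/- Theorem 3 (general sampling design, non-asymptotic form): Suppose λ ≤ π_k for every k ∈ U with λ > 0, |y_k| ≤ C for every k ∈ U, |π_{kl} − π_k π_l| ≤ M for all k ≠ l, and a ≤ 1/(K+1). Then E[(N⁻¹ t̂_IHT − N⁻¹ t_y)²] ≤ E[(N⁻¹ t̂_HT − N⁻¹ t_y)²] + (K² + 2K(N − K)) M C² / (λ² N²). -/
/-!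
Write `Δ` for the covariance matrix of the indicators. For any weights `b`, the mean squared error
of `∑ k, (y k / b k) I_k` around `t_y` is the quadratic form `∑ k l, (y k / b k) (y l / b l) Δ k l`
plus the squared bias `∑ k, y k (π k / b k - 1)`, which vanishes for `b = π`. Raising `π k` to `a`
on `U₂` lowers the diagonal term of `k` by `y k ^ 2 (1 / π k ^ 2 - 1 / a ^ 2) π k (1 - π k)`, and
`a ≤ 1 / (K + 1)` makes this at least `K` times the squared bias of unit `k`; by Cauchy–Schwarz
this absorbs the whole squared bias. An off-diagonal term changes only when `k` or `l` lies in
`U₂`, which happens for `N² - (N - K)² = K² + 2K(N - K)` pairs, and by at most `C² M / λ²` each.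
-/

open MeasureTheory Finset

section LinearStatistic

variable {Ω ι : Type*} [MeasurableSpace Ω] {μ : Measure Ω} [IsProbabilityMeasure μ] [Fintype ι]

theorem integral_sq_sum_mul_sub_eq (X : ι → Ω → ℝ) (hX : ∀ k, Integrable (X k) μ)
    (hXX : ∀ k l, Integrable (fun ω => X k ω * X l ω) μ) (w : ι → ℝ) (c : ℝ) :
    ∫ ω, (∑ k, w k * X k ω - c) ^ 2 ∂μ
      = ∑ k, ∑ l, w k * w l * (∫ ω, X k ω * X l ω ∂μ - (∫ ω, X k ω ∂μ) * ∫ ω, X l ω ∂μ)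
        + (∑ k, w k * ∫ ω, X k ω ∂μ - c) ^ 2 := by
  have hsq_sum (x : ι → ℝ) : (∑ k, w k * x k) ^ 2 = ∑ k, ∑ l, w k * w l * (x k * x l) := by
    rw [sq, sum_mul_sum]
    exact sum_congr rfl fun _ _ => sum_congr rfl fun _ _ => by ring
  have hXX' : Integrable (fun ω => ∑ k, ∑ l, w k * w l * (X k ω * X l ω)) μ :=
    integrable_finsetSum _ fun k _ => integrable_finsetSum _ fun l _ => (hXX k l).const_mul _
  have hX' : Integrable (fun ω => 2 * c * ∑ k, w k * X k ω) μ :=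
    (integrable_finsetSum _ fun k _ => (hX k).const_mul _).const_mul _
  have hexpand : (fun ω => (∑ k, w k * X k ω - c) ^ 2) = fun ω =>
      ∑ k, ∑ l, w k * w l * (X k ω * X l ω) - 2 * c * ∑ k, w k * X k ω + c ^ 2 := by
    ext ω
    rw [sub_sq, hsq_sum]
    ring
  rw [hexpand, integral_add ?_ (integrable_const _), integral_sub hXX' hX',
    integral_const_mul, sub_sq, hsq_sum]
  simp only [integral_finsetSum _ fun k _ => integrable_finsetSum _ fun l _ =>
      (hXX k l).const_mul _, integral_finsetSum _ fun l _ => (hXX _ l).const_mul _,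
    integral_finsetSum _ fun k _ => (hX k).const_mul _, integral_const_mul,
    integral_const, probReal_univ, one_smul, mul_sub, sum_sub_distrib]
  · ring
  · exact hXX'.sub hX'

theorem integral_sq_mul_sum_div_sub_eq (I : ι → Ω → ℝ) (hI : ∀ k, Integrable (I k) μ)
    (hII : ∀ k l, Integrable (fun ω => I k ω * I l ω) μ) (y b : ι → ℝ) (n : ℝ) :
    ∫ ω, (n * (∑ k, I k ω * y k / b k) - n * ∑ k, y k) ^ 2 ∂μ
      = n ^ 2 * (∑ k, ∑ l, y k / b k * (y l / b l)
            * (∫ ω, I k ω * I l ω ∂μ - (∫ ω, I k ω ∂μ) * ∫ ω, I l ω ∂μ)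
          + (∑ k, y k * ((∫ ω, I k ω ∂μ) / b k - 1)) ^ 2) := by
  have hfactor (ω : Ω) : (n * (∑ k, I k ω * y k / b k) - n * ∑ k, y k) ^ 2
      = n ^ 2 * (∑ k, y k / b k * I k ω - ∑ k, y k) ^ 2 := by
    rw [← mul_sub, mul_pow]
    congr 3
    exact sum_congr rfl fun _ _ => by ring
  simp_rw [hfactor]
  rw [integral_const_mul, integral_sq_sum_mul_sub_eq I hI hII, ← sum_sub_distrib]
  congr 3
  exact sum_congr rfl fun _ _ => by ring

end LinearStatistic

section DesignComparison

variable {ι : Type*} [Fintype ι] [DecidableEq ι]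

theorem sum_sum_eq_sum_diag_add_sum_offDiag {M : Type*} [AddCommMonoid M] (f : ι → ι → M) :
    ∑ k, ∑ l, f k l = ∑ k, f k k + ∑ p ∈ univ.offDiag, f p.1 p.2 := by
  rw [← sum_product', ← diag_union_offDiag, sum_union (disjoint_diag_offDiag _), sum_diag]

theorem mul_sq_bias_add_diag_change_nonpos {K a p : ℝ} (y : ℝ) (hK : 0 ≤ K) (hp : 0 < p)
    (hpa : p ≤ a) (haK : a * (K + 1) ≤ 1) :
    K * (y * (p / a - 1)) ^ 2 + (y / a * (y / a) - y / p * (y / p)) * (p * (1 - p)) ≤ 0 := by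
  have ha : 0 < a := hp.trans_le hpa
  have hfactor : K * (y * (p / a - 1)) ^ 2 + (y / a * (y / a) - y / p * (y / p)) * (p * (1 - p))
      = y ^ 2 * (a - p) / (a ^ 2 * p) * (K * p * (a - p) - (p + a) * (1 - p)) := by
    field_simp
    ring
  have hap : 0 ≤ a - p := sub_nonneg.2 hpa
  rw [hfactor]
  refine mul_nonpos_of_nonneg_of_nonpos (by positivity) ?_
  -- `K (a - p) ≤ K a ≤ 1 - a ≤ 1 - p`
  nlinarith [mul_nonneg hK hp.le, mul_nonneg (mul_nonneg hK hp.le) hap]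

theorem sq_bias_add_sum_diag_change_nonpos (y π πs : ι → ℝ) (U : Finset ι) (a : ℝ)
    (hπ : ∀ k, 0 < π k) (hπs : ∀ k, πs k = if k ∈ U then a else π k)
    (hπa : ∀ k ∈ U, π k ≤ a) (haU : a * (#U + 1) ≤ 1) :
    (∑ k, y k * (π k / πs k - 1)) ^ 2
      + ∑ k, (y k / πs k * (y k / πs k) - y k / π k * (y k / π k)) * (π k * (1 - π k)) ≤ 0 := by
  have hsupp {f : ι → ℝ → ℝ} (hf : ∀ k, f k (π k) = 0) :
      ∑ k, f k (πs k) = ∑ k ∈ U, f k a := by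
    rw [← sum_subset (subset_univ U) fun k _ hk => by rw [hπs, if_neg hk, hf]]
    exact sum_congr rfl fun k hk => by rw [hπs, if_pos hk]
  set s : ι → ℝ := fun k => y k * (π k / a - 1)
  set d : ι → ℝ := fun k => (y k / a * (y k / a) - y k / π k * (y k / π k)) * (π k * (1 - π k))
  have hbias : ∑ k, y k * (π k / πs k - 1) = ∑ k ∈ U, s k :=
    hsupp (f := fun k b => y k * (π k / b - 1)) fun k => by simp [div_self (hπ k).ne']
  have hdiag : ∑ k, (y k / πs k * (y k / πs k) - y k / π k * (y k / π k)) * (π k * (1 - π k))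
      = ∑ k ∈ U, d k :=
    hsupp (f := fun k b => (y k / b * (y k / b) - y k / π k * (y k / π k)) * (π k * (1 - π k)))
      fun k => by simp
  have hterm : ∑ k ∈ U, ((#U : ℝ) * s k ^ 2 + d k) ≤ 0 :=
    sum_nonpos fun k hk => mul_sq_bias_add_diag_change_nonpos (y k) (Nat.cast_nonneg _) (hπ k)
      (hπa k hk) haU
  rw [hbias, hdiag]
  rw [sum_add_distrib, ← mul_sum] at hterm
  linarith [sq_sum_le_card_mul_sum_sq (s := U) (f := s)]

theorem abs_div_mul_div_sub_div_mul_div_le {u v p q p' q' lam C : ℝ} (hlam : 0 < lam)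
    (hp : lam ≤ p) (hq : lam ≤ q) (hp' : lam ≤ p') (hq' : lam ≤ q') (hu : |u| ≤ C)
    (hv : |v| ≤ C) :
    |u / p * (v / q) - u / p' * (v / q')| ≤ C ^ 2 / lam ^ 2 := by
  have hinv {p q : ℝ} (hp : lam ≤ p) (hq : lam ≤ q) : 0 ≤ (p * q)⁻¹ ∧ (p * q)⁻¹ ≤ (lam ^ 2)⁻¹ :=
    ⟨by have := hlam.trans_le hp; have := hlam.trans_le hq; positivity,
      inv_anti₀ (by positivity) (by rw [sq]; exact mul_le_mul hp hq hlam.le (hlam.le.trans hp))⟩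
  have huv : |u * v| ≤ C ^ 2 := by
    rw [abs_mul, sq]
    exact mul_le_mul hu hv (abs_nonneg _) ((abs_nonneg _).trans hu)
  calc |u / p * (v / q) - u / p' * (v / q')| = |u * v| * |(p * q)⁻¹ - (p' * q')⁻¹| := by
        rw [← abs_mul]; congr 1; ring
    _ ≤ C ^ 2 * (lam ^ 2)⁻¹ :=
        mul_le_mul huv (abs_sub_le_of_nonneg_of_le (hinv hp hq).1 (hinv hp hq).2
          (hinv hp' hq').1 (hinv hp' hq').2) (abs_nonneg _) ((abs_nonneg _).trans huv)
    _ = C ^ 2 / lam ^ 2 := (div_eq_mul_inv _ _).symm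

theorem card_filter_fst_mem_or_snd_mem (U : Finset ι) :
    (#{p : ι × ι | p.1 ∈ U ∨ p.2 ∈ U} : ℝ) = #U ^ 2 + 2 * #U * (Fintype.card ι - #U) := by
  have hcompl : ({p : ι × ι | p.1 ∈ U ∨ p.2 ∈ U} : Finset (ι × ι)) = univ \ (Uᶜ ×ˢ Uᶜ) := by
    ext p
    simp [or_iff_not_and_not]
  rw [hcompl, card_sdiff_of_subset (subset_univ _), card_univ, card_product, card_compl,
    Fintype.card_prod, Nat.cast_sub (Nat.mul_le_mul (Nat.sub_le _ _) (Nat.sub_le _ _)),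
    Nat.cast_mul, Nat.cast_mul, Nat.cast_sub (card_le_univ U)]
  ring

theorem sum_offDiag_weight_change_le (y b b' : ι → ℝ) (Δ : ι → ι → ℝ) (U : Finset ι)
    {lam C M : ℝ} (hlam : 0 < lam) (hb : ∀ k, lam ≤ b k) (hb' : ∀ k, lam ≤ b' k)
    (hbb' : ∀ k ∉ U, b k = b' k) (hy : ∀ k, |y k| ≤ C) (hM : 0 ≤ M)
    (hΔ : ∀ k l, k ≠ l → |Δ k l| ≤ M) :
    ∑ p ∈ univ.offDiag,
        (y p.1 / b p.1 * (y p.2 / b p.2) - y p.1 / b' p.1 * (y p.2 / b' p.2)) * Δ p.1 p.2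
      ≤ (#U ^ 2 + 2 * #U * (Fintype.card ι - #U)) * (M * C ^ 2 / lam ^ 2) := by
  set g : ι × ι → ℝ := fun p =>
    (y p.1 / b p.1 * (y p.2 / b p.2) - y p.1 / b' p.1 * (y p.2 / b' p.2)) * Δ p.1 p.2
  set T := M * C ^ 2 / lam ^ 2
  have hsupp : ∑ p ∈ univ.offDiag, g p = ∑ p ∈ univ.offDiag with p.1 ∈ U ∨ p.2 ∈ U, g p :=
    (sum_filter_of_ne fun p _ hp => by
      contrapose! hp
      simp [g, hbb' _ hp.1, hbb' _ hp.2]).symm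
  have hbound : ∀ p ∈ univ.offDiag, g p ≤ T := fun p hp =>
    calc g p ≤ |g p| := le_abs_self _
      _ ≤ C ^ 2 / lam ^ 2 * M := by
          rw [abs_mul]
          exact mul_le_mul (abs_div_mul_div_sub_div_mul_div_le hlam (hb _) (hb _) (hb' _) (hb' _)
            (hy _) (hy _)) (hΔ _ _ (mem_offDiag.1 hp).2.2) (abs_nonneg _) (by positivity)
      _ = T := by ring
  have hcard : (#{p ∈ univ.offDiag | p.1 ∈ U ∨ p.2 ∈ U} : ℝ)
      ≤ #U ^ 2 + 2 * #U * (Fintype.card ι - #U) := by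
    rw [← card_filter_fst_mem_or_snd_mem]
    exact_mod_cast card_le_card (filter_subset_filter _ (subset_univ _))
  calc ∑ p ∈ univ.offDiag, g p
      = ∑ p ∈ univ.offDiag with p.1 ∈ U ∨ p.2 ∈ U, g p := hsupp
    _ ≤ #{p ∈ univ.offDiag | p.1 ∈ U ∨ p.2 ∈ U} • T :=
        sum_le_card_nsmul _ _ _ fun p hp => hbound p (mem_filter.1 hp).1
    _ ≤ (#U ^ 2 + 2 * #U * (Fintype.card ι - #U)) * T := by
        rw [nsmul_eq_mul]
        exact mul_le_mul_of_nonneg_right hcard (by positivity)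

theorem sum_sum_mul_add_sq_bias_le (y π πs : ι → ℝ) (Δ : ι → ι → ℝ) (U : Finset ι)
    {a lam C M : ℝ} (hlam : 0 < lam) (hlamπ : ∀ k, lam ≤ π k)
    (hπs : ∀ k, πs k = if k ∈ U then a else π k) (hπa : ∀ k ∈ U, π k ≤ a)
    (haU : a * (#U + 1) ≤ 1) (hy : ∀ k, |y k| ≤ C) (hM : 0 ≤ M)
    (hΔdiag : ∀ k, Δ k k = π k * (1 - π k)) (hΔ : ∀ k l, k ≠ l → |Δ k l| ≤ M) :
    ∑ k, ∑ l, y k / πs k * (y l / πs l) * Δ k l + (∑ k, y k * (π k / πs k - 1)) ^ 2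
      ≤ ∑ k, ∑ l, y k / π k * (y l / π l) * Δ k l
        + (#U ^ 2 + 2 * #U * (Fintype.card ι - #U)) * (M * C ^ 2 / lam ^ 2) := by
  have hπ (k : ι) : 0 < π k := hlam.trans_le (hlamπ k)
  have hlamπs (k : ι) : lam ≤ πs k := by
    rw [hπs]
    split_ifs with hk
    exacts [(hlamπ k).trans (hπa k hk), hlamπ k]
  have hsplit : ∑ k, ∑ l, y k / πs k * (y l / πs l) * Δ k l
        - ∑ k, ∑ l, y k / π k * (y l / π l) * Δ k l
      = ∑ k, (y k / πs k * (y k / πs k) - y k / π k * (y k / π k)) * (π k * (1 - π k))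
        + ∑ p ∈ univ.offDiag,
          (y p.1 / πs p.1 * (y p.2 / πs p.2) - y p.1 / π p.1 * (y p.2 / π p.2)) * Δ p.1 p.2 := by
    simp only [← sum_sub_distrib, ← sub_mul, ← hΔdiag]
    exact sum_sum_eq_sum_diag_add_sum_offDiag _
  have hdiag := sq_bias_add_sum_diag_change_nonpos y π πs U a hπ hπs hπa haU
  have hoff := sum_offDiag_weight_change_le y πs π Δ U hlam hlamπs hlamπ
    (fun k hk => by rw [hπs, if_neg hk]) hy hM hΔ
  linarith

end DesignComparison

theorem iht_le_ht_general_general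
    {Ω : Type*} [MeasurableSpace Ω] (μ : Measure Ω) [IsProbabilityMeasure μ]
    (N : ℕ) (y : Fin N → ℝ) (I : Fin N → Ω → ℝ)
    (hI01 : ∀ k, ∀ ω, I k ω = 0 ∨ I k ω = 1)
    (hIint : ∀ k, Integrable (I k) μ)
    (hIint2 : ∀ k l, Integrable (fun ω => I k ω * I l ω) μ)
    (π : Fin N → ℝ)
    (hπ : ∀ k, π k = ∫ ω, I k ω ∂μ)
    (π2 : Fin N → Fin N → ℝ)
    (hπ2 : ∀ k l, k ≠ l → π2 k l = ∫ ω, I k ω * I l ω ∂μ)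
    (a : ℝ)
    (U2 : Finset (Fin N)) (K : ℕ) (hK : U2.card = K)
    (hU2 : ∀ k ∈ U2, π k ≤ a)
    (haK : a ≤ 1 / ((K : ℝ) + 1))
    (πs : Fin N → ℝ)
    (hπs : ∀ k, πs k = if k ∈ U2 then a else π k)
    (lam : ℝ) (hlam : 0 < lam) (hlamπ : ∀ k, lam ≤ π k)
    (C : ℝ) (hy : ∀ k, |y k| ≤ C)
    (M : ℝ) (hM : 0 ≤ M)
    (hΔ : ∀ k l, k ≠ l → |π2 k l - π k * π l| ≤ M) :
    (∫ ω, ((N : ℝ)⁻¹ * (∑ k, I k ω * y k / πs k) - (N : ℝ)⁻¹ * ∑ k, y k) ^ 2 ∂μ)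
      ≤ (∫ ω, ((N : ℝ)⁻¹ * (∑ k, I k ω * y k / π k) - (N : ℝ)⁻¹ * ∑ k, y k) ^ 2 ∂μ)
        + ((K : ℝ) ^ 2 + 2 * K * (N - K)) * M * C ^ 2 / (lam ^ 2 * N ^ 2) := by
  subst hK
  have hidem (k : Fin N) : (fun ω => I k ω * I k ω) = I k :=
    funext fun ω => by rcases hI01 k ω with h | h <;> simp [h]
  have hcov_diag (k : Fin N) : ∫ ω, I k ω * I k ω ∂μ - π k * π k = π k * (1 - π k) := by
    rw [hidem, ← hπ]
    ring
  have hcov_off (k l : Fin N) (hkl : k ≠ l) : |∫ ω, I k ω * I l ω ∂μ - π k * π l| ≤ M :=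
    hπ2 k l hkl ▸ hΔ k l hkl
  have hbias_ht : ∑ k, y k * (π k / π k - 1) = 0 :=
    sum_eq_zero fun k _ => by rw [div_self (hlam.trans_le (hlamπ k)).ne', sub_self, mul_zero]
  have haU : a * (#U2 + 1) ≤ 1 := (le_div_iff₀ (by positivity)).1 haK
  rw [integral_sq_mul_sum_div_sub_eq I hIint hIint2, integral_sq_mul_sum_div_sub_eq I hIint hIint2]
  simp only [← hπ, hbias_ht]
  have hcore := sum_sum_mul_add_sq_bias_le y π πs (fun k l => ∫ ω, I k ω * I l ω ∂μ - π k * π l)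
    U2 hlam hlamπ hπs hU2 haU hy hM hcov_diag hcov_off
  rw [Fintype.card_fin] at hcore
  refine (mul_le_mul_of_nonneg_left hcore (sq_nonneg _)).trans_eq ?_
  ring

/-- Theorem 3 (general sampling design, non-asymptotic form):
`E[(N⁻¹ t̂_IHT − N⁻¹ t_y)²] ≤ E[(N⁻¹ t̂_HT − N⁻¹ t_y)²] + (K² + 2K(N − K)) M C² / (λ² N²)`. -/
theorem iht_le_ht_general
    {Ω : Type*} [MeasurableSpace Ω] (μ : Measure Ω) [IsProbabilityMeasure μ]
    (N : ℕ) (y : Fin N → ℝ) (I : Fin N → Ω → ℝ)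
    (hI01 : ∀ k, ∀ ω, I k ω = 0 ∨ I k ω = 1)
    (hIint : ∀ k, Integrable (I k) μ)
    (hIint2 : ∀ k l, Integrable (fun ω => I k ω * I l ω) μ)
    (π : Fin N → ℝ)
    (hπ : ∀ k, π k = ∫ ω, I k ω ∂μ)
    (hπmem : ∀ k, π k ∈ Set.Ioc (0 : ℝ) 1)
    (π2 : Fin N → Fin N → ℝ)
    (hπ2 : ∀ k l, k ≠ l → π2 k l = ∫ ω, I k ω * I l ω ∂μ)
    (a : ℝ) (ha : a ∈ Set.Ioc (0 : ℝ) 1)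
    (U2 : Finset (Fin N)) (K : ℕ) (hK : U2.card = K)
    (hU2 : ∀ k ∈ U2, π k ≤ a)
    (haK : a ≤ 1 / ((K : ℝ) + 1))
    (πs : Fin N → ℝ)
    (hπs : ∀ k, πs k = if k ∈ U2 then a else π k)
    (lam : ℝ) (hlam : 0 < lam) (hlamπ : ∀ k, lam ≤ π k)
    (C : ℝ) (hC : 0 < C) (hy : ∀ k, |y k| ≤ C)
    (M : ℝ) (hM : 0 ≤ M)
    (hΔ : ∀ k l, k ≠ l → |π2 k l - π k * π l| ≤ M) :
    (∫ ω, ((N : ℝ)⁻¹ * (∑ k, I k ω * y k / πs k) - (N : ℝ)⁻¹ * ∑ k, y k) ^ 2 ∂μ)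
      ≤ (∫ ω, ((N : ℝ)⁻¹ * (∑ k, I k ω * y k / π k) - (N : ℝ)⁻¹ * ∑ k, y k) ^ 2 ∂μ)
        + ((K : ℝ) ^ 2 + 2 * K * (N - K)) * M * C ^ 2 / (lam ^ 2 * N ^ 2) :=
  iht_le_ht_general_general μ N y I hI01 hIint hIint2 π hπ π2 hπ2 a U2 K hK hU2 haK πs hπs lam hlam
    hlamπ C hy M hM hΔ
end

section
/- Lemma (fourth central moment of the HT mean, non-asymptotic form of Lemma A.1): Suppose λ ≤ π_k for every k ∈ U with λ > 0 and |y_k| ≤ C for every k ∈ U. Suppose further that |E[(I_i − π_i)²(I_k − π_k)(I_l − π_l)]| ≤ M₃ for all pairwise distinct i, k, l ∈ U, and |E[(I_i − π_i)(I_j − π_j)(I_k − π_k)(I_l − π_l)]| ≤ M₄ for all pairwise distinct i, j, k, l ∈ U. Then E[(N⁻¹ t̂_HT − N⁻¹ t_y)⁴] ≤ (C/λ)⁴ · (1/N³ + 7/N² + 6 M₃ / N + M₄). -/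
/-!
With `Z k = (y k / π k) * (I k - π k)` we have `N⁻¹ t̂_HT - N⁻¹ t_y = N⁻¹ ∑ k, Z k` and
`|y k / π k| ≤ C / λ`, so the fourth moment expands into a sum over index maps
`f : Fin 4 → U` of `(∏ r, y (f r) / π (f r)) * E[∏ r, (I (f r) - π (f r))]`. The expectation is
at most `M₄` when `f` takes four distinct values, at most `M₃` when it takes three (one index
repeated) and at most `1` otherwise, while at most `S(4, b) N ^ b` maps take exactly `b` values,
`S` being the Stirling numbers of the second kind, `S(4, ·) = 0, 1, 7, 6, 1`.
-/

open Finset MeasureTheory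

section Counting

variable {ι : Type*} [DecidableEq ι]

theorem Fin.image_univ_cons {n : ℕ} (a : ι) (g : Fin n → ι) :
    univ.image (Fin.cons a g : Fin (n + 1) → ι) = insert a (univ.image g) := by
  ext b
  simp [Fin.exists_fin_succ, eq_comm]

theorem card_filter_card_insert_eq_le [Fintype ι] (s : Finset ι) (k : ℕ) :
    #{a | #(insert a s) = k + 1} ≤
      (if #s = k + 1 then k + 1 else 0) + if #s = k then Fintype.card ι else 0 := by
  by_cases hs : #s = k + 1
  · have : ({a | #(insert a s) = k + 1} : Finset ι) = s := by
      ext a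
      by_cases ha : a ∈ s <;> simp [ha, Finset.card_insert_of_notMem, hs]
    simp [this, hs]
  by_cases hs' : #s = k
  · simpa [hs, hs'] using card_le_univ _
  · have : ({a | #(insert a s) = k + 1} : Finset ι) = ∅ := by
      ext a
      by_cases ha : a ∈ s <;> simp [ha, Finset.card_insert_of_notMem, hs, hs']
    simp [this]

theorem card_filter_card_image_le_stirlingSecond [Fintype ι] :
    ∀ n k : ℕ, #{f : Fin n → ι | #(univ.image f) = k} ≤ n.stirlingSecond k * Fintype.card ι ^ k
  | 0, 0 => by simp
  | 0, k + 1 => by simp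
  | n + 1, 0 => by simp [univ_eq_empty_iff]
  | n + 1, k + 1 => by
    set N := Fintype.card ι
    calc #{f : Fin (n + 1) → ι | #(univ.image f) = k + 1}
        = ∑ g : Fin n → ι, #{a | #(insert a (univ.image g)) = k + 1} := by
          simp only [card_filter, ← (Fin.consEquiv fun _ => ι).sum_comp, Fintype.sum_prod_type]
          rw [sum_comm]
          simp [Fin.consEquiv, Fin.image_univ_cons]
      _ ≤ ∑ g : Fin n → ι, ((if #(univ.image g) = k + 1 then k + 1 else 0) +
            if #(univ.image g) = k then N else 0) :=
          sum_le_sum fun g _ => card_filter_card_insert_eq_le _ k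
      _ = (k + 1) * #{g : Fin n → ι | #(univ.image g) = k + 1} +
            N * #{g : Fin n → ι | #(univ.image g) = k} := by
          rw [sum_add_distrib, ← sum_filter, ← sum_filter]
          simp [mul_comm]
      _ ≤ (k + 1) * (n.stirlingSecond (k + 1) * N ^ (k + 1)) +
            N * (n.stirlingSecond k * N ^ k) := by
          gcongr <;> exact card_filter_card_image_le_stirlingSecond n _
      _ = (n + 1).stirlingSecond (k + 1) * N ^ (k + 1) := by
          rw [Nat.stirlingSecond_succ_succ]; ring

theorem sum_comp_card_image_le_stirlingSecond [Fintype ι] (n : ℕ) {w : ℕ → ℝ}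
    (hw : ∀ b, 0 ≤ w b) :
    ∑ f : Fin n → ι, w #(univ.image f) ≤
      ∑ b ∈ range (n + 1), n.stirlingSecond b * (Fintype.card ι : ℝ) ^ b * w b := by
  rw [← sum_fiberwise_of_maps_to (g := fun f : Fin n → ι => #(univ.image f)) (t := range (n + 1))
    fun f _ => mem_range_succ_iff.mpr ((card_image_le).trans (by simp))]
  refine sum_le_sum fun b _ => ?_
  rw [sum_congr rfl fun f hf => congrArg w (mem_filter.mp hf).2, sum_const, nsmul_eq_mul]
  gcongr
  · exact hw b
  · exact_mod_cast card_filter_card_image_le_stirlingSecond n b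

theorem Finset.pairwise_ne_of_three_le_card {a b c : ι}
    (h : 3 ≤ #({a, b, c} : Finset ι)) : a ≠ b ∧ a ≠ c ∧ b ≠ c := by
  refine ⟨?_, ?_, ?_⟩ <;> rintro rfl <;>
    simp only [mem_insert, mem_singleton, true_or, or_true, insert_eq_of_mem] at h <;>
    exact absurd (h.trans card_le_two) (by norm_num)

theorem Fin.exists_prod_eq_sq_mul_mul_of_card_image_eq_three {f : Fin 4 → ι}
    (hf : #(univ.image f) = 3) :
    ∃ i k l, i ≠ k ∧ i ≠ l ∧ k ≠ l ∧ ∀ x : ι → ℝ, ∏ r, x (f r) = x i ^ 2 * x k * x l := by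
  obtain ⟨r, -, s, -, hrs, hfrs⟩ := exists_ne_map_eq_of_card_lt_of_maps_to
    (s := (univ : Finset (Fin 4))) (t := univ.image f) (f := f) (by simp [hf]) (fun q _ => by simp)
  obtain ⟨t, u, htu, hcompl⟩ := card_eq_two.mp
    (show #({r, s}ᶜ : Finset (Fin 4)) = 2 by rw [card_compl, card_pair hrs]; rfl)
  have hmem : ∀ q, q = r ∨ q = s ∨ q = t ∨ q = u := by
    intro q
    by_cases hq : q ∈ ({r, s} : Finset (Fin 4))
    · simp only [mem_insert, mem_singleton] at hq; tauto
    · rw [← mem_compl, hcompl] at hq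
      simp only [mem_insert, mem_singleton] at hq; tauto
  have hsub : univ.image f ⊆ {f r, f t, f u} := by
    intro b hb
    obtain ⟨q, -, rfl⟩ := mem_image.mp hb
    rcases hmem q with rfl | rfl | rfl | rfl <;> simp [hfrs]
  obtain ⟨hrt, hru, htu'⟩ := pairwise_ne_of_three_le_card (hf ▸ card_le_card hsub)
  refine ⟨f r, f t, f u, hrt, hru, htu', fun x => ?_⟩
  rw [← prod_mul_prod_compl {r, s}, hcompl, prod_pair hrs, prod_pair htu, hfrs]
  ring

end Counting

theorem norm_prod_le_one_of_abs_le_one {κ : Type*} (s : Finset κ) {x : κ → ℝ}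
    (hx : ∀ j, |x j| ≤ 1) : ‖∏ j ∈ s, x j‖ ≤ 1 := by
  rw [Real.norm_eq_abs, abs_prod]
  exact prod_le_one (fun j _ => abs_nonneg _) fun j _ => hx j

section Moments
variable {Ω : Type*} [MeasurableSpace Ω] {μ : Measure Ω} {ι : Type*}

theorem integral_sum_pow_eq_sum_integral_prod [Fintype ι] (X : ι → Ω → ℝ) (n : ℕ)
    (hX : ∀ f : Fin n → ι, Integrable (fun ω => ∏ r, X (f r) ω) μ) :
    ∫ ω, (∑ k, X k ω) ^ n ∂μ = ∑ f : Fin n → ι, ∫ ω, ∏ r, X (f r) ω ∂μ := by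
  simp_rw [← Fin.prod_const, Fintype.prod_sum]
  exact integral_finsetSum _ fun f _ => hX f

section Bounded
variable {κ : Type*} {X : κ → Ω → ℝ}

theorem integrable_prod_of_abs_le_one [IsFiniteMeasure μ] (hmeas : ∀ j, Measurable (X j))
    (hX : ∀ j ω, |X j ω| ≤ 1) (s : Finset κ) :
    Integrable (fun ω => ∏ j ∈ s, X j ω) μ :=
  Integrable.of_bound (Finset.measurable_prod s fun j _ => hmeas j).aestronglyMeasurable 1
    (ae_of_all _ fun ω => norm_prod_le_one_of_abs_le_one s (hX · ω))

theorem abs_integral_prod_le_one [IsProbabilityMeasure μ] (hX : ∀ j ω, |X j ω| ≤ 1)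
    (s : Finset κ) : |∫ ω, ∏ j ∈ s, X j ω ∂μ| ≤ 1 := by
  simpa using norm_integral_le_of_norm_le_const (μ := μ)
    (ae_of_all _ fun ω => norm_prod_le_one_of_abs_le_one s (hX · ω))

end Bounded

section FourthMoment
variable [IsProbabilityMeasure μ] [DecidableEq ι] {D : ι → Ω → ℝ} {M3 M4 : ℝ}

theorem abs_integral_prod_le_of_card_image (hD : ∀ k ω, |D k ω| ≤ 1)
    (h3 : ∀ i k l, i ≠ k → i ≠ l → k ≠ l → |∫ ω, D i ω ^ 2 * D k ω * D l ω ∂μ| ≤ M3)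
    (h4 : ∀ i j k l, i ≠ j → i ≠ k → i ≠ l → j ≠ k → j ≠ l → k ≠ l →
      |∫ ω, D i ω * D j ω * D k ω * D l ω ∂μ| ≤ M4)
    (f : Fin 4 → ι) :
    |∫ ω, ∏ r, D (f r) ω ∂μ| ≤
      if #(univ.image f) = 4 then M4 else if #(univ.image f) = 3 then M3 else 1 := by
  split_ifs with hf4 hf3
  · have hinj : Function.Injective f := by
      rw [← Set.injOn_univ, ← coe_univ, ← card_image_iff, hf4, card_univ, Fintype.card_fin]
    simp only [Fin.prod_univ_four]
    exact h4 _ _ _ _ (hinj.ne (by decide)) (hinj.ne (by decide)) (hinj.ne (by decide))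
      (hinj.ne (by decide)) (hinj.ne (by decide)) (hinj.ne (by decide))
  · obtain ⟨i, k, l, hik, hil, hkl, hprod⟩ :=
      Fin.exists_prod_eq_sq_mul_mul_of_card_image_eq_three hf3
    simp only [fun ω => hprod fun k => D k ω]
    exact h3 i k l hik hil hkl
  · exact abs_integral_prod_le_one (X := fun r => D (f r)) (fun r => hD (f r)) univ

theorem integral_sum_mul_pow_four_le [Fintype ι] (c : ι → ℝ) {a : ℝ}
    (hmeas : ∀ k, Measurable (D k)) (hD : ∀ k ω, |D k ω| ≤ 1) (hc : ∀ k, |c k| ≤ a)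
    (hM3 : 0 ≤ M3) (hM4 : 0 ≤ M4)
    (h3 : ∀ i k l, i ≠ k → i ≠ l → k ≠ l → |∫ ω, D i ω ^ 2 * D k ω * D l ω ∂μ| ≤ M3)
    (h4 : ∀ i j k l, i ≠ j → i ≠ k → i ≠ l → j ≠ k → j ≠ l → k ≠ l →
      |∫ ω, D i ω * D j ω * D k ω * D l ω ∂μ| ≤ M4) :
    ∫ ω, (∑ k, c k * D k ω) ^ 4 ∂μ ≤
      a ^ 4 * ((Fintype.card ι : ℝ) + 7 * (Fintype.card ι : ℝ) ^ 2
        + 6 * M3 * (Fintype.card ι : ℝ) ^ 3 + M4 * (Fintype.card ι : ℝ) ^ 4) := by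
  set w : ℕ → ℝ := fun d => if d = 4 then M4 else if d = 3 then M3 else 1
  have hw : ∀ d, 0 ≤ w d := fun d => by simp only [w]; split_ifs <;> positivity
  have hprod : ∀ (f : Fin 4 → ι) ω, ∏ r, c (f r) * D (f r) ω = (∏ r, c (f r)) * ∏ r, D (f r) ω :=
    fun f ω => prod_mul_distrib
  have hc4 : ∀ f : Fin 4 → ι, |∏ r, c (f r)| ≤ a ^ 4 := fun f =>
    (abs_prod _ _).trans_le
      ((prod_le_prod (fun r _ => abs_nonneg _) fun r _ => hc (f r)).trans_eq (by simp))
  calc ∫ ω, (∑ k, c k * D k ω) ^ 4 ∂μ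
      = ∑ f : Fin 4 → ι, (∏ r, c (f r)) * ∫ ω, ∏ r, D (f r) ω ∂μ := by
        rw [integral_sum_pow_eq_sum_integral_prod _ 4 fun f => by
          simpa only [hprod] using (integrable_prod_of_abs_le_one (X := fun r => D (f r))
            (fun r => hmeas (f r)) (fun r => hD (f r)) univ).const_mul _]
        simp only [hprod, integral_const_mul]
    _ ≤ ∑ f : Fin 4 → ι, a ^ 4 * w #(univ.image f) := by
        refine sum_le_sum fun f _ => (le_abs_self _).trans ?_
        rw [abs_mul]
        exact mul_le_mul (hc4 f) (abs_integral_prod_le_of_card_image hD h3 h4 f)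
          (abs_nonneg _) ((abs_nonneg _).trans (hc4 f))
    _ ≤ a ^ 4 * ∑ b ∈ range 5, Nat.stirlingSecond 4 b * (Fintype.card ι : ℝ) ^ b * w b := by
        rw [← mul_sum]
        gcongr
        exact sum_comp_card_image_le_stirlingSecond 4 hw
    _ = _ := by
        congr 1
        norm_num [sum_range_succ, w, Nat.stirlingSecond]
        ring

end FourthMoment

end Moments

theorem ht_fourth_moment_bound_general
    {Ω : Type*} [MeasurableSpace Ω] (μ : Measure Ω) [IsProbabilityMeasure μ]
    (N : ℕ) (y : Fin N → ℝ) (I : Fin N → Ω → ℝ)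
    (hI01 : ∀ k, ∀ ω, I k ω = 0 ∨ I k ω = 1)
    (hImeas : ∀ k, Measurable (I k))
    (π : Fin N → ℝ)
    (hπmem : ∀ k, π k ∈ Set.Ioc (0 : ℝ) 1)
    (lam : ℝ) (hlam : 0 < lam) (hlamπ : ∀ k, lam ≤ π k)
    (C : ℝ) (hC : 0 < C) (hy : ∀ k, |y k| ≤ C)
    (M3 : ℝ) (hM3 : 0 ≤ M3)
    (hmom3 : ∀ i k l : Fin N, i ≠ k → i ≠ l → k ≠ l →
      |∫ ω, (I i ω - π i) ^ 2 * (I k ω - π k) * (I l ω - π l) ∂μ| ≤ M3)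
    (M4 : ℝ) (hM4 : 0 ≤ M4)
    (hmom4 : ∀ i j k l : Fin N, i ≠ j → i ≠ k → i ≠ l → j ≠ k → j ≠ l → k ≠ l →
      |∫ ω, (I i ω - π i) * (I j ω - π j) * (I k ω - π k) * (I l ω - π l) ∂μ| ≤ M4) :
    (∫ ω, ((N : ℝ)⁻¹ * (∑ k, I k ω * y k / π k) - (N : ℝ)⁻¹ * ∑ k, y k) ^ 4 ∂μ)
      ≤ (C / lam) ^ 4 *
          (1 / (N : ℝ) ^ 3 + 7 / (N : ℝ) ^ 2 + 6 * M3 / (N : ℝ) + M4) := by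
  have hdev : ∀ k ω, |I k ω - π k| ≤ 1 := fun k ω => by
    have := hπmem k
    rcases hI01 k ω with h | h <;> rw [h, abs_le] <;> constructor <;> linarith [this.1, this.2]
  have hcoef : ∀ k, |y k / π k| ≤ C / lam := fun k => by
    rw [abs_div, abs_of_pos (hπmem k).1]
    exact div_le_div₀ hC.le (hy k) hlam (hlamπ k)
  have hcentered : ∀ ω, (N : ℝ)⁻¹ * (∑ k, I k ω * y k / π k) - (N : ℝ)⁻¹ * ∑ k, y k
      = (N : ℝ)⁻¹ * ∑ k, y k / π k * (I k ω - π k) := fun ω => by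
    rw [← mul_sub, ← sum_sub_distrib]
    congr 1
    refine sum_congr rfl fun k _ => ?_
    field_simp [(hπmem k).1.ne']
  have hbound := integral_sum_mul_pow_four_le (μ := μ) (fun k => y k / π k)
    (fun k => (hImeas k).sub_const _) hdev hcoef hM3 hM4 hmom3 hmom4
  rw [Fintype.card_fin] at hbound
  simp_rw [hcentered, mul_pow]
  rw [integral_const_mul]
  rcases N.eq_zero_or_pos with rfl | hN
  · simpa using by positivity
  calc _ ≤ ((N : ℝ)⁻¹) ^ 4 * ((C / lam) ^ 4 *
        (N + 7 * (N : ℝ) ^ 2 + 6 * M3 * (N : ℝ) ^ 3 + M4 * (N : ℝ) ^ 4)) := by gcongr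
    _ = _ := by
      field_simp

/-- Lemma (fourth central moment of the HT mean, non-asymptotic form of Lemma A.1):
`E[(N⁻¹ t̂_HT − N⁻¹ t_y)⁴] ≤ (C/λ)⁴ · (1/N³ + 7/N² + 6 M₃/N + M₄)`. -/
theorem ht_fourth_moment_bound
    {Ω : Type*} [MeasurableSpace Ω] (μ : Measure Ω) [IsProbabilityMeasure μ]
    (N : ℕ) (y : Fin N → ℝ) (I : Fin N → Ω → ℝ)
    (hI01 : ∀ k, ∀ ω, I k ω = 0 ∨ I k ω = 1)
    (hImeas : ∀ k, Measurable (I k))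
    (π : Fin N → ℝ)
    (hπ : ∀ k, π k = ∫ ω, I k ω ∂μ)
    (hπmem : ∀ k, π k ∈ Set.Ioc (0 : ℝ) 1)
    (lam : ℝ) (hlam : 0 < lam) (hlamπ : ∀ k, lam ≤ π k)
    (C : ℝ) (hC : 0 < C) (hy : ∀ k, |y k| ≤ C)
    (M3 : ℝ) (hM3 : 0 ≤ M3)
    (hmom3 : ∀ i k l : Fin N, i ≠ k → i ≠ l → k ≠ l →
      |∫ ω, (I i ω - π i) ^ 2 * (I k ω - π k) * (I l ω - π l) ∂μ| ≤ M3)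
    (M4 : ℝ) (hM4 : 0 ≤ M4)
    (hmom4 : ∀ i j k l : Fin N, i ≠ j → i ≠ k → i ≠ l → j ≠ k → j ≠ l → k ≠ l →
      |∫ ω, (I i ω - π i) * (I j ω - π j) * (I k ω - π k) * (I l ω - π l) ∂μ| ≤ M4) :
    (∫ ω, ((N : ℝ)⁻¹ * (∑ k, I k ω * y k / π k) - (N : ℝ)⁻¹ * ∑ k, y k) ^ 4 ∂μ)
      ≤ (C / lam) ^ 4 *
          (1 / (N : ℝ) ^ 3 + 7 / (N : ℝ) ^ 2 + 6 * M3 / (N : ℝ) + M4) :=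
  ht_fourth_moment_bound_general μ N y I hI01 hImeas π hπmem lam hlam hlamπ C hC hy M3 hM3 hmom3 M4
    hM4 hmom4
end
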